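/- arXiv:0804.1687 — 11 statements merged into one kernel-verified Lean document; each statement's English description precedes it below -/
import Mathlib

section
/- Let K be a field, F a field extension of K (via algebraMap K F), and f ∈ K[x] a polynomial with deg f ≥ 2 that is tame (the characteristic of K does not divide deg f). Then f is indecomposable in K[x] if and only if its image f.map(algebraMap K F) is indecomposable in F[x]. -/
open Polynomial

/-- A polynomial (of degree ≥ 2) is indecomposable if in every functional
decomposition one of the components is linear. -/
def Polynomial.Indecomposable {K : Type*} [Field K] (f : K[X]) : Prop :=
  ∀ g h : K[X], f = g.comp h → g.natDegree = 1 ∨ h.natDegree = 1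

/-!
Normalize a decomposition `f = G.comp H` over `F` so that `H` is monic with `H.coeff 0 = 0`, and
let `r = G.natDegree`, `n = H.natDegree`. Above degree `(r - 1) * n` the polynomial `G.comp H`
agrees with `G.leadingCoeff * H ^ r`, and the coefficient of `H ^ r` in degree `(r - 1) * n + i` is
`r * H.coeff i` plus a polynomial expression in the coefficients of `H` above `i`. Since `r` is
invertible (tameness), descending induction on `i` puts every coefficient of `H` in `K`. As `H` is
monic, `G` then descends too, by peeling off its leading terms one at a time.
-/

namespace Polynomial

section SubringClass

variable {F S : Type*} [CommRing F] [SetLike S F] [SubringClass S F] (R : S)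

theorem coeff_mul_mem_of_lt {p q : F[X]} {i j t : ℕ}
    (hp : ∀ l, i < l → p.coeff l ∈ R) (hq : ∀ l, j < l → q.coeff l ∈ R)
    (hi : i + q.natDegree < t) (hj : p.natDegree + j < t) : (p * q).coeff t ∈ R := by
  rw [coeff_mul]
  refine sum_mem fun ⟨a, b⟩ hab => ?_
  dsimp only
  rw [Finset.HasAntidiagonal.mem_antidiagonal] at hab
  by_cases ha : i < a
  · by_cases hb : j < b
    · exact mul_mem (hp a ha) (hq b hb)
    · rw [coeff_eq_zero_of_natDegree_lt (by omega : p.natDegree < a), zero_mul]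
      exact zero_mem R
  · rw [coeff_eq_zero_of_natDegree_lt (by omega : q.natDegree < b), mul_zero]
    exact zero_mem R

theorem coeff_pow_succ_mem_of_lt {p : F[X]} {i : ℕ} (hp : ∀ l, i < l → p.coeff l ∈ R)
    (k : ℕ) : ∀ t, k * p.natDegree + i < t → (p ^ (k + 1)).coeff t ∈ R := by
  induction k with
  | zero => simpa using hp
  | succ k ih =>
    intro t ht
    have hdeg : (p ^ (k + 1)).natDegree ≤ (k + 1) * p.natDegree := natDegree_pow_le
    rw [add_mul, one_mul] at ht hdeg
    rw [pow_succ]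
    exact coeff_mul_mem_of_lt R ih hp (by omega) (by omega)

theorem Monic.coeff_pow_succ_sub_mem {H : F[X]} (hH : H.Monic) {i : ℕ} (hi : i < H.natDegree)
    (hup : ∀ l, i < l → H.coeff l ∈ R) (r : ℕ) :
    (H ^ (r + 1)).coeff (r * H.natDegree + i) - (r + 1 : ℕ) * H.coeff i ∈ R := by
  set n := H.natDegree
  set T := H.eraseLead
  have hHT : H = X ^ n + T := by
    conv_lhs => rw [← eraseLead_add_C_mul_X_pow H]
    rw [hH.leadingCoeff, C_1, one_mul, add_comm]
  have hTup : ∀ l, i < l → T.coeff l ∈ R := fun l hl => by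
    rw [eraseLead_coeff]
    split_ifs
    exacts [zero_mem R, hup l hl]
  have hTdeg : T.natDegree < n := (eraseLead_natDegree_le H).trans_lt (by omega)
  -- Expand `(X ^ n + T) ^ (r + 1)` binomially: in degree `r * n + i` the term `X ^ (n * (r + 1))`
  -- vanishes, the term with `T ^ 1` gives `(r + 1) * T.coeff i`, and the terms with `T ^ j`,
  -- `j ≥ 2`, only involve coefficients of `T` above `i`.
  have htop : ((X ^ n) ^ (r + 1) * T ^ (r + 1 - (r + 1)) *
      ((r + 1).choose (r + 1) : F[X])).coeff (r * n + i) = 0 := by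
    rw [Nat.sub_self, Nat.choose_self, pow_zero, mul_one, Nat.cast_one, mul_one, ← pow_mul,
      coeff_X_pow, if_neg (by nlinarith)]
  have hlin : ((X ^ n) ^ r * T ^ (r + 1 - r) * ((r + 1).choose r : F[X])).coeff (r * n + i) =
      (r + 1 : ℕ) * H.coeff i := by
    rw [Nat.add_sub_cancel_left, pow_one, Nat.choose_succ_self_right, coeff_mul_natCast,
      ← pow_mul, show r * n + i = i + n * r by ring, coeff_X_pow_mul, eraseLead_coeff_of_ne i hi.ne,
      mul_comm]
  have hrest : ∑ k ∈ Finset.range r,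
      ((X ^ n) ^ k * T ^ (r + 1 - k) * ((r + 1).choose k : F[X])).coeff (r * n + i) ∈ R := by
    refine sum_mem fun k hk => ?_
    obtain ⟨j, rfl⟩ : ∃ j, r = k + j + 1 := ⟨r - k - 1, by rw [Finset.mem_range] at hk; omega⟩
    rw [coeff_mul_natCast, ← pow_mul, show k + j + 1 + 1 - k = j + 1 + 1 by omega,
      show (k + j + 1) * n + i = ((j + 1) * n + i) + n * k by ring, coeff_X_pow_mul]
    exact mul_mem (coeff_pow_succ_mem_of_lt R hTup (j + 1) _ (by nlinarith)) (natCast_mem R _)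
  nth_rewrite 1 [hHT]
  rw [add_pow, finsetSum_coeff, Finset.sum_range_succ, Finset.sum_range_succ, htop, hlin,
    add_zero, add_sub_cancel_right]
  exact hrest

end SubringClass

theorem comp_eq_eraseLead_comp_add {F : Type*} [CommSemiring F] (G H : F[X]) :
    G.comp H = G.eraseLead.comp H + C G.leadingCoeff * H ^ G.natDegree := by
  conv_lhs => rw [← eraseLead_add_C_mul_X_pow G]
  rw [add_comp, mul_comp, C_comp, X_pow_comp]

theorem coeff_comp_eq_leadingCoeff_mul_coeff_pow {F : Type*} [CommSemiring F] {G H : F[X]}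
    {d : ℕ} (hd : (G.natDegree - 1) * H.natDegree < d) :
    (G.comp H).coeff d = G.leadingCoeff * (H ^ G.natDegree).coeff d := by
  have hlow : (G.eraseLead.comp H).natDegree < d :=
    natDegree_comp_le.trans_lt <|
      (Nat.mul_le_mul_right _ (eraseLead_natDegree_le G)).trans_lt hd
  rw [comp_eq_eraseLead_comp_add, coeff_add, coeff_C_mul, coeff_eq_zero_of_natDegree_lt hlow,
    zero_add]

theorem Monic.mem_lifts_of_comp_mem_lifts {K F : Type*} [Ring K] [CommRing F]
    {φ : K →+* F} {G H : F[X]} (hH : H.Monic) (hH0 : H.natDegree ≠ 0) (hHφ : H ∈ lifts φ)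
    (hGH : G.comp H ∈ lifts φ) : G ∈ lifts φ := by
  induction hc : G.support.card generalizing G with
  | zero => simp [card_support_eq_zero.1 hc, zero_mem]
  | succ c ih =>
    obtain ⟨a, ha⟩ : G.leadingCoeff ∈ Set.range φ := by
      have := (lifts_iff_coeff_lifts _).1 hGH (G.natDegree * H.natDegree)
      rwa [coeff_comp_degree_mul_degree hH0, hH.leadingCoeff, one_pow, mul_one] at this
    have herase : G.eraseLead ∈ lifts φ := by
      refine ih ?_ (card_support_eraseLead' hc)
      rw [eq_sub_of_add_eq (comp_eq_eraseLead_comp_add G H).symm, sub_eq_add_neg, ← ha,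
        ← neg_mul, ← C_neg, ← map_neg]
      exact add_mem hGH (mul_mem (C_mem_lifts φ _) (pow_mem hHφ _))
    rw [← eraseLead_add_C_mul_X_pow G, ← ha]
    exact add_mem herase (mul_mem (C_mem_lifts φ a) (X_pow_mem_lifts φ _))

theorem Monic.coeff_mem_of_coeff_comp_mem {F S : Type*} [Field F] [SetLike S F]
    [SubfieldClass S F] {R : S} {G H : F[X]} (hH : H.Monic) (hG : (G.natDegree : F) ≠ 0)
    (hGH : ∀ l, (G.comp H).coeff l ∈ R) {i : ℕ} (hi : i ≠ 0) : H.coeff i ∈ R := by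
  induction hk : H.natDegree - i using Nat.strong_induction_on generalizing i with
  | _ k ih =>
  obtain hin | rfl | hni := lt_trichotomy i H.natDegree
  · have hup : ∀ l, i < l → H.coeff l ∈ R := fun l hl =>
      ih (H.natDegree - l) (by omega) (by omega) rfl
    obtain ⟨s, hs⟩ : ∃ s, G.natDegree = s + 1 :=
      Nat.exists_eq_succ_of_ne_zero fun h => hG (by rw [h, Nat.cast_zero])
    have hlc : G.leadingCoeff ∈ R := by
      have := hGH (G.natDegree * H.natDegree)
      rwa [coeff_comp_degree_mul_degree (by omega), hH.leadingCoeff, one_pow, mul_one] at this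
    have hlc0 : G.leadingCoeff ≠ 0 := leadingCoeff_ne_zero.2 (by rintro rfl; simp at hs)
    have hcomp : (G.comp H).coeff (s * H.natDegree + i) =
        G.leadingCoeff * (H ^ (s + 1)).coeff (s * H.natDegree + i) := by
      rw [← hs]
      exact coeff_comp_eq_leadingCoeff_mul_coeff_pow (by rw [hs, Nat.add_sub_cancel]; omega)
    have hpow : (H ^ (s + 1)).coeff (s * H.natDegree + i) ∈ R := by
      rw [← inv_mul_cancel_left₀ hlc0 ((H ^ (s + 1)).coeff _), ← hcomp]
      exact mul_mem (inv_mem hlc) (hGH _)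
    have hmul := sub_mem hpow (hH.coeff_pow_succ_sub_mem R hin hup s)
    rw [sub_sub_cancel] at hmul
    rw [← inv_mul_cancel_left₀ (hs ▸ hG : ((s + 1 : ℕ) : F) ≠ 0) (H.coeff i)]
    exact mul_mem (inv_mem (natCast_mem R _)) hmul
  · rw [hH.coeff_natDegree]
    exact one_mem R
  · rw [coeff_eq_zero_of_natDegree_lt hni]
    exact zero_mem R

theorem exists_comp_eq_comp_monic_coeff_zero {F : Type*} [Field F] (G H : F[X])
    (hH : H.natDegree ≠ 0) :
    ∃ G' H' : F[X], G'.comp H' = G.comp H ∧ H'.Monic ∧ H'.coeff 0 = 0 ∧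
      G'.natDegree = G.natDegree ∧ H'.natDegree = H.natDegree := by
  set u := H.leadingCoeff
  have hu : u ≠ 0 := leadingCoeff_ne_zero.2 (by rintro rfl; simp at hH)
  have hmonic : (C u⁻¹ * H).Monic :=
    monic_C_mul_of_mul_leadingCoeff_eq_one (inv_mul_cancel₀ hu)
  have hdeg : (C u⁻¹ * H).natDegree = H.natDegree := natDegree_C_mul (inv_ne_zero hu)
  refine ⟨G.comp (C u * X + C (H.coeff 0)), C u⁻¹ * H - C (u⁻¹ * H.coeff 0), ?_,
    hmonic.sub_of_left (degree_C_le.trans_lt ?_), by simp, ?_, ?_⟩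
  · rw [comp_assoc, add_comp, mul_comp, C_comp, C_comp, X_comp, mul_sub, ← mul_assoc, ← C_mul,
      ← C_mul, mul_inv_cancel₀ hu, ← mul_assoc, mul_inv_cancel₀ hu, C_1, one_mul, one_mul,
      sub_add_cancel]
  · rw [degree_eq_natDegree hmonic.ne_zero, hdeg]
    exact_mod_cast Nat.pos_of_ne_zero hH
  · rw [natDegree_comp, natDegree_linear hu, mul_one]
  · rw [natDegree_sub_C, hdeg]

theorem exists_comp_eq_of_map_eq_comp {K F : Type*} [Field K] [Field F] (φ : K →+* F)
    {f : K[X]} {G H : F[X]} (hf : f.map φ = G.comp H) (hH : H.natDegree ≠ 0)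
    (hG : (G.natDegree : F) ≠ 0) :
    ∃ g h : K[X], f = g.comp h ∧ g.natDegree = G.natDegree ∧ h.natDegree = H.natDegree := by
  obtain ⟨G', H', hcomp, hmonic, hcoeff0, hG', hH'⟩ :=
    exists_comp_eq_comp_monic_coeff_zero G H hH
  have hfφ : G'.comp H' ∈ lifts φ := (mem_lifts _).2 ⟨f, hcomp ▸ hf⟩
  have hHφ : H' ∈ lifts φ := by
    refine (lifts_iff_coeff_lifts _).2 fun i => ?_
    rcases eq_or_ne i 0 with rfl | hi
    · exact ⟨0, by rw [hcoeff0, map_zero]⟩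
    · refine RingHom.mem_fieldRange.1 (hmonic.coeff_mem_of_coeff_comp_mem (hG' ▸ hG) ?_ hi)
      exact fun l => RingHom.mem_fieldRange.2 ((lifts_iff_coeff_lifts _).1 hfφ l)
  obtain ⟨g, rfl⟩ := (mem_lifts _).1 (hmonic.mem_lifts_of_comp_mem_lifts (hH' ▸ hH) hHφ hfφ)
  obtain ⟨h, rfl⟩ := (mem_lifts _).1 hHφ
  refine ⟨g, h, map_injective φ φ.injective ?_, ?_, ?_⟩
  · rw [map_comp, hf, hcomp]
  · rw [← hG', natDegree_map]
  · rw [← hH', natDegree_map]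

end Polynomial

theorem tame_indecomposable_iff_indecomposable_map_general
    {K F : Type*} [Field K] [Field F] [Algebra K F] (f : K[X])
    (htame : ¬ (ringChar K ∣ f.natDegree)) :
    f.Indecomposable ↔ (f.map (algebraMap K F)).Indecomposable := by
  refine ⟨fun hf G H hGH => ?_, fun hf g h hgh => ?_⟩
  · have hdeg : G.natDegree * H.natDegree = f.natDegree := by
      rw [← natDegree_comp, ← hGH, natDegree_map]
    have hH : H.natDegree ≠ 0 := by
      rintro h0
      rw [h0, mul_zero] at hdeg
      exact htame (hdeg ▸ dvd_zero _)
    have hG : (G.natDegree : F) ≠ 0 := by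
      rw [← map_natCast (algebraMap K F), _root_.map_ne_zero, ne_eq, ringChar.spec]
      exact fun hdvd => htame (hdeg ▸ hdvd.mul_right _)
    obtain ⟨g, h, rfl, hg, hh⟩ := exists_comp_eq_of_map_eq_comp _ hGH hH hG
    simpa only [hg, hh] using hf g h rfl
  · simpa only [natDegree_map] using hf (g.map _) (h.map _) (by rw [hgh, map_comp])

theorem tame_indecomposable_iff_indecomposable_map
    {K F : Type*} [Field K] [Field F] [Algebra K F] (f : K[X])
    (hdeg : 2 ≤ f.natDegree) (htame : ¬ (ringChar K ∣ f.natDegree)) :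
    f.Indecomposable ↔ (f.map (algebraMap K F)).Indecomposable :=
  tame_indecomposable_iff_indecomposable_map_general f htame
end

section
/- Let K be a field and f ∈ K(x) nonconstant with deg f strictly smaller than the cardinality of K (in particular this holds whenever K is infinite). Then there exist units u, v ∈ K(x) such that u∘f∘v is in normal form. -/
open Polynomial

/-- The degree of a rational function. -/
noncomputable def RatFunc.deg {K : Type*} [Field K] (f : RatFunc K) : ℕ :=
  max f.num.natDegree f.denom.natDegree

/-- Composition of rational functions: `g.comp h = g ∘ h`. -/
noncomputable def RatFunc.comp {K : Type*} [Field K] (g h : RatFunc K) : RatFunc K :=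
  (Polynomial.aeval h g.num) / (Polynomial.aeval h g.denom)

/-- A rational function is in normal form if the degree of its numerator is larger than
the degree of its denominator and `0` is a root of the numerator. -/
def RatFunc.IsNormalForm {K : Type*} [Field K] (f : RatFunc K) : Prop :=
  f.denom.natDegree < f.num.natDegree ∧ f.num.eval 0 = 0

/-
Write `f = P / Q` in lowest terms. Composing on the left with the Möbius transformation
`(a x + b) / (c x + d)` replaces `(P, Q)` by `(a P + b Q, c P + d Q)`, again a coprime pair.
Some such pair `(S, T)` has `deg T < deg S = deg f`: take `(P, Q)` itself if `deg Q < deg P`,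
and `(Q, P - pₙ Q)` otherwise, where `n = deg Q` and `pₙ` is the coefficient of `xⁿ` in `P`.
As `deg T < #K`, there is a point `x₀` with `T x₀ ≠ 0`; replacing `S` by `S - (S x₀ / T x₀) T`
keeps the degrees and makes `x₀` a root of the numerator, and composing on the right with
`x + x₀` moves that root to `0`.
-/
theorem IsCoprime.of_isUnit_det {R : Type*} [CommRing R] {p q : R} (hpq : IsCoprime p q)
    {a b c d : R} (hdet : IsUnit (a * d - b * c)) : IsCoprime (a * p + b * q) (c * p + d * q) := by
  obtain ⟨x, y, hxy⟩ := hpq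
  obtain ⟨k, hk⟩ := hdet.exists_right_inv
  exact ⟨k * (x * d - y * c), k * (y * a - x * b),
    by linear_combination (a * d - b * c) * k * hxy + hk⟩

theorem Polynomial.natDegree_sub_C_coeff_mul_lt {R : Type*} [Ring R] {p q : R[X]} (hq : q.Monic)
    (hpq : p.natDegree ≤ q.natDegree) (hq₀ : 0 < q.natDegree) :
    (p - C (p.coeff q.natDegree) * q).natDegree < q.natDegree := by
  rw [Nat.lt_iff_le_pred hq₀, natDegree_le_iff_coeff_eq_zero]
  intro N hN
  rcases Nat.lt_or_ge q.natDegree N with h | h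
  · simp [coeff_eq_zero_of_natDegree_lt h, coeff_eq_zero_of_natDegree_lt (hpq.trans_lt h)]
  · simp [show N = q.natDegree by omega, hq.coeff_natDegree]

section Linear

variable {K : Type*} [Field K] {a b c d : K}

theorem IsCoprime.C_mul_add_C_mul {p q : K[X]} (hpq : IsCoprime p q) (hdet : a * d - b * c ≠ 0) :
    IsCoprime (C a * p + C b * q) (C c * p + C d * q) :=
  hpq.of_isUnit_det <| by
    rw [← C_mul, ← C_mul, ← C_sub]
    exact isUnit_C.mpr hdet.isUnit

theorem Polynomial.isCoprime_C_mul_X_add_C (hdet : a * d - b * c ≠ 0) :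
    IsCoprime (C a * X + C b) (C c * X + C d) := by
  simpa only [mul_one] using (isCoprime_one_right (x := (X : K[X]))).C_mul_add_C_mul hdet

theorem Polynomial.C_mul_X_add_C_ne_zero (hdet : a * d - b * c ≠ 0) : C c * X + C d ≠ 0 := by
  intro h
  have hc : c = 0 := by simpa using congrArg (coeff · 1) h
  have hd : d = 0 := by simpa using congrArg (coeff · 0) h
  simp [hc, hd] at hdet

end Linear

namespace RatFunc

variable {K : Type*} [Field K]

theorem num_div_of_isCoprime {p q : K[X]} (hpq : IsCoprime p q) :
    (algebraMap K[X] (RatFunc K) p / algebraMap K[X] (RatFunc K) q).num =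
      Polynomial.C q.leadingCoeff⁻¹ * p := by
  classical
  have : gcd p q = 1 := by
    rw [← normalize_gcd, normalize_eq_one, gcd_isUnit_iff]; exact hpq
  simp [this]

theorem denom_div_of_isCoprime {p q : K[X]} (hpq : IsCoprime p q) (hq : q ≠ 0) :
    (algebraMap K[X] (RatFunc K) p / algebraMap K[X] (RatFunc K) q).denom =
      Polynomial.C q.leadingCoeff⁻¹ * q := by
  classical
  have : gcd p q = 1 := by
    rw [← normalize_gcd, normalize_eq_one, gcd_isUnit_iff]; exact hpq
  simp [hq, this]

theorem comp_div_of_isCoprime {p q : K[X]} (hpq : IsCoprime p q) (hq : q ≠ 0) (f : RatFunc K) :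
    (algebraMap K[X] (RatFunc K) p / algebraMap K[X] (RatFunc K) q).comp f =
      aeval f p / aeval f q := by
  have hk : algebraMap K (RatFunc K) q.leadingCoeff⁻¹ ≠ 0 := by simpa using hq
  rw [RatFunc.comp, num_div_of_isCoprime hpq, denom_div_of_isCoprime hpq hq, map_mul, map_mul,
    Polynomial.aeval_C, mul_div_mul_left _ _ hk]

theorem deg_div_of_isCoprime {p q : K[X]} (hpq : IsCoprime p q) (hq : q ≠ 0) :
    (algebraMap K[X] (RatFunc K) p / algebraMap K[X] (RatFunc K) q).deg =
      max p.natDegree q.natDegree := by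
  have hk : q.leadingCoeff⁻¹ ≠ 0 := by simpa using hq
  rw [deg, num_div_of_isCoprime hpq, denom_div_of_isCoprime hpq hq, natDegree_C_mul hk,
    natDegree_C_mul hk]

theorem isNormalForm_div_iff {p q : K[X]} (hpq : IsCoprime p q) (hq : q ≠ 0) :
    (algebraMap K[X] (RatFunc K) p / algebraMap K[X] (RatFunc K) q).IsNormalForm ↔
      q.natDegree < p.natDegree ∧ p.eval 0 = 0 := by
  have hk : q.leadingCoeff⁻¹ ≠ 0 := by simpa using hq
  rw [IsNormalForm, num_div_of_isCoprime hpq, denom_div_of_isCoprime hpq hq, natDegree_C_mul hk,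
    natDegree_C_mul hk, Polynomial.eval_mul, Polynomial.eval_C, mul_eq_zero, or_iff_right hk]

theorem deg_algebraMap (p : K[X]) : (algebraMap K[X] (RatFunc K) p).deg = p.natDegree := by
  simp [deg]

theorem isNormalForm_div_comp_X_add_C {p q : K[X]} (hpq : IsCoprime p q) (hq : q ≠ 0)
    (hdeg : q.natDegree < p.natDegree) {b : K} (hb : p.eval b = 0) :
    ((algebraMap K[X] (RatFunc K) p / algebraMap K[X] (RatFunc K) q).comp
      (algebraMap K[X] (RatFunc K) (Polynomial.X + Polynomial.C b))).IsNormalForm := by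
  rw [comp_div_of_isCoprime hpq hq, aeval_algebraMap_apply, aeval_algebraMap_apply,
    ← comp_eq_aeval, ← comp_eq_aeval, isNormalForm_div_iff]
  · simpa [natDegree_comp] using ⟨hdeg, hb⟩
  · exact hpq.map (compRingHom _)
  · exact comp_X_add_C_ne_zero_iff.mpr hq

noncomputable def mobius (a b c d : K) : RatFunc K :=
  algebraMap K[X] (RatFunc K) (Polynomial.C a * Polynomial.X + Polynomial.C b) /
    algebraMap K[X] (RatFunc K) (Polynomial.C c * Polynomial.X + Polynomial.C d)

section Mobius

variable {a b c d : K}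

theorem deg_mobius (hdet : a * d - b * c ≠ 0) : (mobius a b c d).deg = 1 := by
  rw [mobius, deg_div_of_isCoprime (isCoprime_C_mul_X_add_C hdet) (C_mul_X_add_C_ne_zero hdet)]
  by_cases ha : a = 0
  · have hc : c ≠ 0 := by rintro rfl; simp [ha] at hdet
    simp [natDegree_linear hc, ha]
  · rw [natDegree_linear ha]
    exact max_eq_left natDegree_linear_le

theorem mobius_comp (hdet : a * d - b * c ≠ 0) (f : RatFunc K) :
    (mobius a b c d).comp f =
      algebraMap K[X] (RatFunc K) (Polynomial.C a * f.num + Polynomial.C b * f.denom) /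
        algebraMap K[X] (RatFunc K) (Polynomial.C c * f.num + Polynomial.C d * f.denom) := by
  have hQ : algebraMap K[X] (RatFunc K) f.denom ≠ 0 := algebraMap_ne_zero f.denom_ne_zero
  rw [mobius, comp_div_of_isCoprime (isCoprime_C_mul_X_add_C hdet) (C_mul_X_add_C_ne_zero hdet)]
  conv_lhs => rw [← f.num_div_denom]
  simp only [map_add, map_mul, Polynomial.aeval_X, Polynomial.aeval_C, algebraMap_C,
    algebraMap_eq_C]
  field_simp

end Mobius

theorem exists_units_comp_isNormalForm_of_natDegree_lt (f : RatFunc K) {a b c d : K}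
    (hdet : a * d - b * c ≠ 0)
    (hlt : (Polynomial.C c * f.num + Polynomial.C d * f.denom).natDegree <
      (Polynomial.C a * f.num + Polynomial.C b * f.denom).natDegree)
    (hcard : ((Polynomial.C c * f.num + Polynomial.C d * f.denom).natDegree : Cardinal) <
      Cardinal.mk K) :
    ∃ u v : RatFunc K, u.deg = 1 ∧ v.deg = 1 ∧ ((u.comp f).comp v).IsNormalForm := by
  set S := Polynomial.C a * f.num + Polynomial.C b * f.denom
  set T := Polynomial.C c * f.num + Polynomial.C d * f.denom
  have hST : IsCoprime S T := f.isCoprime_num_denom.C_mul_add_C_mul hdet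
  have hT : T ≠ 0 := by
    rintro hT
    rw [hT, isCoprime_zero_right] at hST
    rw [hT, natDegree_zero, natDegree_eq_zero_of_isUnit hST] at hlt
    exact lt_irrefl 0 hlt
  obtain ⟨x₀, hx₀⟩ := T.exists_eval_ne_zero_of_natDegree_lt_card hT hcard
  set e := S.eval x₀ / T.eval x₀
  have hdet' : (a - e * c) * d - (b - e * d) * c ≠ 0 := by
    rwa [show (a - e * c) * d - (b - e * d) * c = a * d - b * c by ring]
  have hcomp : (mobius (a - e * c) (b - e * d) c d).comp f =
      algebraMap K[X] (RatFunc K) (S - Polynomial.C e * T) / algebraMap K[X] (RatFunc K) T := by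
    rw [mobius_comp hdet']
    congr 2
    simp only [S, T, Polynomial.C_sub, Polynomial.C_mul]
    ring
  refine ⟨_, algebraMap K[X] (RatFunc K) (Polynomial.X + Polynomial.C x₀), deg_mobius hdet',
    by rw [deg_algebraMap, natDegree_X_add_C], ?_⟩
  rw [hcomp]
  refine isNormalForm_div_comp_X_add_C ?_ hT ?_ ?_
  · simpa [sub_eq_add_neg, mul_comm] using hST.add_mul_left_left (-Polynomial.C e)
  · rwa [natDegree_sub_eq_left_of_natDegree_lt ((natDegree_C_mul_le e T).trans_lt hlt)]
  · simp [e, hx₀]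

theorem exists_det_ne_zero_and_natDegree_lt (f : RatFunc K) (hf : 1 ≤ f.deg) :
    ∃ a b c d : K, a * d - b * c ≠ 0 ∧
      (Polynomial.C c * f.num + Polynomial.C d * f.denom).natDegree <
        (Polynomial.C a * f.num + Polynomial.C b * f.denom).natDegree ∧
      (Polynomial.C a * f.num + Polynomial.C b * f.denom).natDegree = f.deg := by
  rcases lt_or_ge f.denom.natDegree f.num.natDegree with h | h
  · refine ⟨1, 0, 0, 1, by norm_num, ?_, ?_⟩ <;> simp [deg, h, h.le]
  · have hdeg : f.deg = f.denom.natDegree := max_eq_right h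
    refine ⟨0, 1, 1, -f.num.coeff f.denom.natDegree, by norm_num, ?_, ?_⟩
    · simpa [sub_eq_add_neg] using
        natDegree_sub_C_coeff_mul_lt f.monic_denom h (hdeg ▸ hf)
    · simp [hdeg]

end RatFunc

/-- Theorem 4(i): if `deg f` is smaller than the cardinality of `K`, then `f` can be
normalized by composing with units on both sides. -/
theorem exists_units_comp_isNormalForm {K : Type*} [Field K] (f : RatFunc K)
    (hf : 1 ≤ f.deg) (hcard : (f.deg : Cardinal) < Cardinal.mk K) :
    ∃ u v : RatFunc K, u.deg = 1 ∧ v.deg = 1 ∧ ((u.comp f).comp v).IsNormalForm := by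
  obtain ⟨a, b, c, d, hdet, hlt, hS⟩ := f.exists_det_ne_zero_and_natDegree_lt hf
  refine f.exists_units_comp_isNormalForm_of_natDegree_lt hdet hlt (lt_trans ?_ hcard)
  exact_mod_cast hS ▸ hlt
end

section
/- Let K be a field and f, g, h ∈ K(x) nonconstant rational functions, all three in normal form, with f = g∘h. Then h.num divides f.num in K[x] and h.denom divides f.denom in K[x]. -/
open Polynomial

/-!
Write `g = A / B` and `h = P / Q` in lowest terms and let `N = deg g = deg A`. Homogenizing `A`
and `B` in degree `N` gives `g ∘ h = A_N(P, Q) / B_N(P, Q)` with both terms polynomials, so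
`f.num * B_N(P, Q) = A_N(P, Q) * f.denom`. Modulo `P` one has `A_N(P, Q) ≡ A(0) Q^N = 0` and
`B_N(P, Q) ≡ B(0) Q^N`, where `B(0) ≠ 0` because `A(0) = 0` and `A`, `B` are coprime; hence
`P ∣ f.num`. Symmetrically, modulo `Q` one has `B_N(P, Q) ≡ 0` since `deg B < N`, and
`A_N(P, Q) ≡ lc(A) P^N`; hence `Q ∣ f.denom`.
-/

namespace Polynomial

section CommSemiring

variable {R A : Type*} [CommSemiring R] [CommSemiring A] [Algebra R A]

theorem aeval_homogenize_eq_sum (p : R[X]) (n : ℕ) (a b : A) :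
    MvPolynomial.aeval ![a, b] (p.homogenize n) =
      ∑ k ∈ Finset.range (n + 1), p.coeff k • (a ^ k * b ^ (n - k)) := by
  simp only [homogenize, map_sum, MvPolynomial.aeval_monomial,
    Finset.Nat.sum_antidiagonal_eq_sum_range_succ_mk]
  refine Finset.sum_congr rfl fun k _ => ?_
  rw [Finsupp.update_eq_add_single, Finsupp.prod_add_index', Finsupp.prod_single_index,
    Finsupp.prod_single_index, Algebra.smul_def]
  all_goals simp [pow_add]

theorem map_aeval_homogenize {L : Type*} [Field L] [Algebra R L] (φ : A →ₐ[R] L) {p : R[X]}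
    {n : ℕ} (hn : p.natDegree ≤ n) (a : A) {b : A} (hb : φ b ≠ 0) :
    φ (MvPolynomial.aeval ![a, b] (p.homogenize n)) = φ b ^ n * aeval (φ a / φ b) p := by
  rw [aeval_homogenize_eq_sum, map_sum, aeval_eq_sum_range' (Nat.lt_succ_of_le hn),
    Finset.mul_sum]
  refine Finset.sum_congr rfl fun k hk => ?_
  rw [map_smul, map_mul, map_pow, map_pow,
    pow_sub₀ _ hb (Nat.lt_succ_iff.mp (Finset.mem_range.mp hk)), div_pow, mul_smul_comm]
  field_simp

end CommSemiring

section CommRing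

variable {R A : Type*} [CommSemiring R] [CommRing A] [Algebra R A]

theorem left_dvd_aeval_homogenize_sub (p : R[X]) (n : ℕ) (a b : A) :
    a ∣ MvPolynomial.aeval ![a, b] (p.homogenize n) - p.coeff 0 • b ^ n := by
  rw [aeval_homogenize_eq_sum, Finset.sum_range_succ', pow_zero, one_mul, Nat.sub_zero,
    add_sub_cancel_right]
  refine Finset.dvd_sum fun k _ => ?_
  rw [Algebra.smul_def]
  exact dvd_mul_of_dvd_right (dvd_mul_of_dvd_left (dvd_pow_self a k.succ_ne_zero) _) _

theorem right_dvd_aeval_homogenize_sub (p : R[X]) (n : ℕ) (a b : A) :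
    b ∣ MvPolynomial.aeval ![a, b] (p.homogenize n) - p.coeff n • a ^ n := by
  rw [aeval_homogenize_eq_sum, Finset.sum_range_succ, Nat.sub_self, pow_zero, mul_one,
    add_sub_cancel_right]
  refine Finset.dvd_sum fun k hk => ?_
  have : n - k ≠ 0 := by have := Finset.mem_range.mp hk; omega
  rw [Algebra.smul_def]
  exact dvd_mul_of_dvd_right (dvd_mul_of_dvd_right (dvd_pow_self b this) _) _

theorem isCoprime_aeval_homogenize_left {p : R[X]} (n : ℕ) {a b : A} (hab : IsCoprime a b)
    (hp : IsUnit (p.coeff 0)) : IsCoprime a (MvPolynomial.aeval ![a, b] (p.homogenize n)) := by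
  obtain ⟨c, hc⟩ := left_dvd_aeval_homogenize_sub p n a b
  rw [sub_eq_iff_eq_add'.mp hc, Algebra.smul_def]
  exact ((isCoprime_mul_unit_left_right (hp.map _) _ _).mpr hab.pow_right).add_mul_left_right c

theorem isCoprime_aeval_homogenize_right {p : R[X]} (n : ℕ) {a b : A} (hab : IsCoprime a b)
    (hp : IsUnit (p.coeff n)) : IsCoprime b (MvPolynomial.aeval ![a, b] (p.homogenize n)) := by
  obtain ⟨c, hc⟩ := right_dvd_aeval_homogenize_sub p n a b
  rw [sub_eq_iff_eq_add'.mp hc, Algebra.smul_def]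
  exact ((isCoprime_mul_unit_left_right (hp.map _) _ _).mpr hab.symm.pow_right).add_mul_left_right
    c

theorem left_dvd_aeval_homogenize {p : R[X]} (n : ℕ) (a b : A) (hp : p.coeff 0 = 0) :
    a ∣ MvPolynomial.aeval ![a, b] (p.homogenize n) := by
  simpa [hp] using left_dvd_aeval_homogenize_sub p n a b

theorem right_dvd_aeval_homogenize {p : R[X]} {n : ℕ} (a b : A) (hp : p.coeff n = 0) :
    b ∣ MvPolynomial.aeval ![a, b] (p.homogenize n) := by
  simpa [hp] using right_dvd_aeval_homogenize_sub p n a b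

end CommRing

end Polynomial

namespace RatFunc

variable {K : Type*} [Field K]

theorem algebraMap_aeval_homogenize {p : K[X]} {n : ℕ} (hn : p.natDegree ≤ n) (h : RatFunc K) :
    algebraMap K[X] (RatFunc K) (MvPolynomial.aeval ![h.num, h.denom] (p.homogenize n)) =
      algebraMap K[X] (RatFunc K) h.denom ^ n * aeval h p := by
  simpa [num_div_denom] using map_aeval_homogenize (IsScalarTower.toAlgHom K K[X] (RatFunc K))
    hn h.num (algebraMap_ne_zero h.denom_ne_zero)

theorem not_isRoot_denom_of_isRoot_num {f : RatFunc K} {a : K} (ha : f.num.IsRoot a) :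
    ¬ f.denom.IsRoot a := fun ha' =>
  not_isUnit_X_sub_C a <| f.isCoprime_num_denom.isUnit_of_dvd'
    (dvd_iff_isRoot.mpr ha) (dvd_iff_isRoot.mpr ha')

theorem num_mul_eq_of_eq_comp {f g h : RatFunc K} (hcomp : f = g.comp h) (hf : f ≠ 0) :
    f.num * MvPolynomial.aeval ![h.num, h.denom] (g.denom.homogenize g.deg) =
      MvPolynomial.aeval ![h.num, h.denom] (g.num.homogenize g.deg) * f.denom := by
  have hB : aeval h g.denom ≠ 0 := fun h0 => hf (by rw [hcomp, comp, h0, div_zero])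
  have hfB : f * aeval h g.denom = aeval h g.num := by
    rw [hcomp, comp, div_mul_cancel₀ _ hB]
  rw [← num_div_denom f] at hfB
  apply algebraMap_injective K
  rw [map_mul, map_mul, algebraMap_aeval_homogenize (n := g.deg) (le_max_right _ _),
    algebraMap_aeval_homogenize (n := g.deg) (le_max_left _ _), ← hfB]
  have := algebraMap_ne_zero f.denom_ne_zero
  field_simp

theorem IsNormalForm.ne_zero {f : RatFunc K} (hf : f.IsNormalForm) : f ≠ 0 := by
  rintro rfl
  simp [IsNormalForm] at hf

theorem IsNormalForm.deg_eq {f : RatFunc K} (hf : f.IsNormalForm) : f.deg = f.num.natDegree :=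
  max_eq_left hf.1.le

end RatFunc

theorem num_denom_dvd_of_normalForm_comp_general {K : Type*} [Field K] (f g h : RatFunc K)
    (hf : f.IsNormalForm) (hg : g.IsNormalForm)
    (hcomp : f = g.comp h) :
    h.num ∣ f.num ∧ h.denom ∣ f.denom := by
  have key := RatFunc.num_mul_eq_of_eq_comp hcomp hf.ne_zero
  rw [hg.deg_eq] at key
  have hcop := h.isCoprime_num_denom
  have hB0 : IsUnit (g.denom.coeff 0) := by
    rw [isUnit_iff_ne_zero, coeff_zero_eq_eval_zero]
    exact RatFunc.not_isRoot_denom_of_isRoot_num hg.2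
  have hAn : IsUnit g.num.leadingCoeff :=
    isUnit_iff_ne_zero.mpr (leadingCoeff_ne_zero.mpr (ne_zero_of_natDegree_gt hg.1))
  have hBn : g.denom.coeff g.num.natDegree = 0 := coeff_eq_zero_of_natDegree_lt hg.1
  have hA0 : g.num.coeff 0 = 0 := by rw [coeff_zero_eq_eval_zero]; exact hg.2
  constructor
  · refine (isCoprime_aeval_homogenize_left g.num.natDegree hcop hB0).dvd_of_dvd_mul_right ?_
    rw [key]
    exact dvd_mul_of_dvd_left (left_dvd_aeval_homogenize _ _ _ hA0) _
  · refine (isCoprime_aeval_homogenize_right g.num.natDegree hcop hAn).dvd_of_dvd_mul_left ?_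
    rw [← key]
    exact dvd_mul_of_dvd_right (right_dvd_aeval_homogenize _ _ hBn) _

/-- If `f = g ∘ h` with `f`, `g`, `h` in normal form, then the numerator of `h` divides
the numerator of `f` and the denominator of `h` divides the denominator of `f`. -/
theorem num_denom_dvd_of_normalForm_comp {K : Type*} [Field K] (f g h : RatFunc K)
    (hf1 : 1 ≤ f.deg) (hg1 : 1 ≤ g.deg) (hh1 : 1 ≤ h.deg)
    (hf : f.IsNormalForm) (hg : g.IsNormalForm) (hh : h.IsNormalForm)
    (hcomp : f = g.comp h) :
    h.num ∣ f.num ∧ h.denom ∣ f.denom :=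
  num_denom_dvd_of_normalForm_comp_general f g h hf hg hcomp
end

section
/- Let K be a field and H an infinite subgroup of the group Aut_K K(x) of K-algebra automorphisms of the rational function field K(x) = RatFunc K. Then the fixed field of H is K; that is, every f ∈ K(x) satisfying σ(f) = f for all σ ∈ H lies in the image of the structure map K → K(x) (f is constant). -/
/-!
If the fixed field `E` of `H` were larger than `K`, then `X` would be algebraic over
`E`, so `K(x) = E(X)` would be finite over `E`. But `H` fixes `E`, so it embeds
into the finite group `Aut_E K(x)`.
-/

open IntermediateField

theorem IntermediateField.finite_of_finiteDimensional_fixedField {F L : Type*} [Field F] [Field L]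
    [Algebra F L] (H : Subgroup (L ≃ₐ[F] L)) [FiniteDimensional (fixedField H) L] :
    Finite H := by
  have : Finite (fixingSubgroup (fixedField H)) :=
    .of_equiv _ (fixingSubgroupEquiv (fixedField H)).toEquiv.symm
  exact Finite.of_injective _ (Subgroup.inclusion_injective ((le_iff_le _ _).mp le_rfl))

theorem RatFunc.finiteDimensional_of_ne_bot {K : Type*} [Field K]
    {E : IntermediateField K (RatFunc K)} (hE : E ≠ ⊥) : FiniteDimensional E (RatFunc K) :=
  have := adjoin.finiteDimensional (IntermediateField.isAlgebraic_X hE).isIntegral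
  (IntermediateField.adjoinXEquiv E).toLinearEquiv.finiteDimensional

/-- The fixed field of an infinite group of `K`-automorphisms of `K(x)` is `K` itself. -/
theorem fixedField_of_infinite_subgroup_eq_bot {K : Type*} [Field K]
    (H : Subgroup (RatFunc K ≃ₐ[K] RatFunc K)) (hH : Infinite H) :
    IntermediateField.fixedField H = ⊥ := by
  by_contra hE
  have := RatFunc.finiteDimensional_of_ne_bot hE
  exact not_finite_iff_infinite.mpr hH (finite_of_finiteDimensional_fixedField H)
end

section
/- Let K be a field and H a finite subgroup of Aut_K K(x) of order m. Then there exists a nonconstant f ∈ K(x) with deg f = m such that Fix(H) equals the intermediate field K(f) generated by f over K inside K(x); moreover the field extension Fix(H) ⊆ K(x) is normal. -/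
open Polynomial

/-!
By Lüroth's theorem the intermediate field `Fix(H)` is `K(f)` for some `f`. Artin's theorem gives
`[K(x) : Fix(H)] = |H|` and normality of `K(x) / Fix(H)`, while `[K(x) : K(f)] = deg f`.
-/

open IntermediateField Module

theorem IntermediateField.finrank_fixedField_eq_natCard {K L : Type*} [Field K] [Field L]
    [Algebra K L] (H : Subgroup (L ≃ₐ[K] L)) [Finite H] :
    finrank (fixedField H) L = Nat.card H := by
  have := Fintype.ofFinite H
  rw [Nat.card_eq_fintype_card]
  exact FixedPoints.finrank_eq_card H L

theorem RatFunc.deg_eq_finrank_adjoin {K : Type*} [Field K] (f : RatFunc K) :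
    f.deg = finrank K⟮f⟯ (RatFunc K) :=
  (RatFunc.finrank_eq_max_natDegree f).symm

/-- The fixed field of a finite group `H` of `K`-automorphisms of `K(x)` is generated by a
single rational function of degree `|H|`, and the extension `Fix(H) ⊆ K(x)` is normal. -/
theorem fixedField_of_finite_subgroup {K : Type*} [Field K]
    (H : Subgroup (RatFunc K ≃ₐ[K] RatFunc K)) [Finite H] :
    (∃ f : RatFunc K, 1 ≤ f.deg ∧ f.deg = Nat.card H ∧
      IntermediateField.fixedField H = IntermediateField.adjoin K {f}) ∧
    Normal (IntermediateField.fixedField H) (RatFunc K) := by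
  set f := RatFunc.Luroth.generator (fixedField H)
  have hf : fixedField H = K⟮f⟯ := RatFunc.Luroth.eq_adjoin_generator
  have hdeg : f.deg = Nat.card H := by
    rw [f.deg_eq_finrank_adjoin, ← hf, finrank_fixedField_eq_natCard]
  exact ⟨⟨f, hdeg ▸ Nat.card_pos, hdeg, hf⟩, FixedPoints.normal H (RatFunc K)⟩
end

section
/- Let K be a field and f ∈ K(x) nonconstant. (a) If the order of G(f) equals deg f, then the extension K(f) ⊆ K(x) is normal. (b) Conversely, if the extension K(f) ⊆ K(x) is separable and normal, then the order of G(f) equals deg f. -/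
open Polynomial

/-!
The degree formula `[K(x) : K(f)] = deg f` makes `K(x)/K(f)` finite. The stabilizer
`G(f)` is the automorphism group of `K(x)/K(f)`, and a finite extension is Galois exactly when
its automorphism group has order equal to its degree.
-/

open IntermediateField

namespace IntermediateField

variable {F E : Type*} [Field F] [Field E] [Algebra F E]

theorem fixingSubgroup_adjoin_simple (α : E) :
    fixingSubgroup F⟮α⟯ = MulAction.stabilizer Gal(E/F) α := by
  ext σ
  simpa using forall_mem_adjoin_smul_eq_self_iff F (S := {α}) σ

theorem card_stabilizer_eq_card_aut_adjoin_simple (α : E) :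
    Nat.card (MulAction.stabilizer Gal(E/F) α) = Nat.card Gal(E/F⟮α⟯) := by
  rw [← fixingSubgroup_adjoin_simple]
  exact Nat.card_congr (fixingSubgroupEquiv F⟮α⟯).toEquiv

end IntermediateField

/-- (a) If the order of the fixing group of `f` equals `deg f`, then `K(f) ⊆ K(x)` is a
normal extension; (b) conversely, if `K(f) ⊆ K(x)` is separable and normal, then the
order of the fixing group of `f` equals `deg f`. -/
theorem card_fixingGroup_eq_deg_iff_normal {K : Type*} [Field K]
    (f : RatFunc K) (hf : 1 ≤ f.deg) :
    (Nat.card (MulAction.stabilizer (RatFunc K ≃ₐ[K] RatFunc K) f) = f.deg →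
      Normal (IntermediateField.adjoin K {f}) (RatFunc K)) ∧
    (Algebra.IsSeparable (IntermediateField.adjoin K {f}) (RatFunc K) →
      Normal (IntermediateField.adjoin K {f}) (RatFunc K) →
      Nat.card (MulAction.stabilizer (RatFunc K ≃ₐ[K] RatFunc K) f) = f.deg) := by
  have hrank : Module.finrank K⟮f⟯ (RatFunc K) = f.deg := f.finrank_eq_max_natDegree
  have : FiniteDimensional K⟮f⟯ (RatFunc K) := Module.finite_of_finrank_pos (hrank ▸ hf)
  rw [card_stabilizer_eq_card_aut_adjoin_simple, ← hrank]
  refine ⟨fun hcard => (IsGalois.of_card_aut_eq_finrank _ _ hcard).to_normal, fun _ _ => ?_⟩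
  have : IsGalois K⟮f⟯ (RatFunc K) := ⟨⟩
  exact IsGalois.card_aut_eq_finrank _ _
end

section
/- Let K be a field and f ∈ K(x) indecomposable with deg f = p a prime number. Then the stabilizer G(f) is either the trivial subgroup or a cyclic group of order p. -/
open Polynomial

/-!
An automorphism of `K(x)` fixes `f` exactly when it fixes `K(f)` pointwise, so `G(f)` is the
group of `K(f)`-automorphisms of `K(x)`. By Artin's theorem its order is the degree of `K(x)` over
its fixed field, which divides `[K(x) : K(f)] = deg f = p`.
-/

open IntermediateField

theorem IntermediateField.fixingSubgroup_adjoin_simple_s12 {F E : Type*} [Field F] [Field E]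
    [Algebra F E] (x : E) :
    fixingSubgroup F⟮x⟯ = MulAction.stabilizer Gal(E/F) x := by
  ext σ
  simpa using forall_mem_adjoin_smul_eq_self_iff F (S := {x}) σ

theorem IntermediateField.card_fixingSubgroup_dvd_finrank {F E : Type*} [Field F] [Field E]
    [Algebra F E] (L : IntermediateField F E) [FiniteDimensional L E] :
    Nat.card L.fixingSubgroup ∣ Module.finrank L E := by
  rw [Nat.card_congr (fixingSubgroupEquiv L).toEquiv, ← Subgroup.card_top,
    ← finrank_fixedField_eq_card]
  exact Module.finrank_dvd_finrank_left L (fixedField (⊤ : Subgroup Gal(E/L))) E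

theorem RatFunc.card_stabilizer_dvd_deg {K : Type*} [Field K] (f : RatFunc K) (hf : 0 < f.deg) :
    Nat.card (MulAction.stabilizer Gal(RatFunc K/K) f) ∣ f.deg := by
  have hrank : Module.finrank K⟮f⟯ (RatFunc K) = f.deg := finrank_eq_max_natDegree f
  have : FiniteDimensional K⟮f⟯ (RatFunc K) := Module.finite_of_finrank_pos (hrank ▸ hf)
  rw [← fixingSubgroup_adjoin_simple_s12, ← hrank]
  exact card_fixingSubgroup_dvd_finrank _

theorem fixingGroup_of_indecomposable_prime_degree_general {K : Type*} [Field K]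
    (f : RatFunc K) (p : ℕ) (hp : p.Prime) (hdeg : f.deg = p) :
    MulAction.stabilizer (RatFunc K ≃ₐ[K] RatFunc K) f = ⊥ ∨
      (IsCyclic (MulAction.stabilizer (RatFunc K ≃ₐ[K] RatFunc K) f) ∧
        Nat.card (MulAction.stabilizer (RatFunc K ≃ₐ[K] RatFunc K) f) = p) := by
  have hdvd : Nat.card (MulAction.stabilizer _ f) ∣ p :=
    hdeg ▸ f.card_stabilizer_dvd_deg (hdeg ▸ hp.pos)
  rcases hp.eq_one_or_self_of_dvd _ hdvd with hcard | hcard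
  · exact Or.inl (Subgroup.card_eq_one.mp hcard)
  · have : Fact p.Prime := ⟨hp⟩
    exact Or.inr ⟨isCyclic_of_prime_card hcard, hcard⟩

/-- The fixing group of an indecomposable rational function of prime degree `p` is either
trivial or cyclic of order `p`. -/
theorem fixingGroup_of_indecomposable_prime_degree {K : Type*} [Field K]
    (f : RatFunc K) (p : ℕ) (hp : p.Prime) (hdeg : f.deg = p)
    (hind : ∀ g h : RatFunc K, f = g.comp h → g.deg = 1 ∨ h.deg = 1) :
    MulAction.stabilizer (RatFunc K ≃ₐ[K] RatFunc K) f = ⊥ ∨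
      (IsCyclic (MulAction.stabilizer (RatFunc K ≃ₐ[K] RatFunc K) f) ∧
        Nat.card (MulAction.stabilizer (RatFunc K ≃ₐ[K] RatFunc K) f) = p) :=
  fixingGroup_of_indecomposable_prime_degree_general f p hp hdeg
end

section
/- Let K be a field and f ∈ K(x) indecomposable with deg f composite (i.e., deg f = a·b for some integers a, b ≥ 2). Then the stabilizer G(f) is trivial. -/
open Polynomial

/-! A nontrivial `σ` fixing `f` fixes `K⟮f⟯`, over which `K(x)` has degree `deg f`, so `σ` has
finite order and `G(f)` contains an element `ρ` of prime order `p`. By Lüroth the fixed field of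
`⟨ρ⟩` is `K⟮h⟯` for some `h`, and by Artin `deg h = [K(x) : K⟮h⟯] = p`. Since `f` lies in that
fixed field, `f = g ∘ h` with `deg f = deg g * p`; indecomposability then makes `deg f = p`
prime or `p = 1`. -/

namespace IntermediateField

variable {F E : Type*} [Field F] [Field E] [Algebra F E]

theorem finrank_fixedField_eq_natCard_s13 (H : Subgroup (E ≃ₐ[F] E)) [Finite H] :
    Module.finrank (fixedField H) E = Nat.card H := by
  have := Fintype.ofFinite H
  rw [Nat.card_eq_fintype_card]
  exact FixedPoints.finrank_eq_card H E

theorem stabilizer_eq_fixingSubgroup_adjoin_simple (x : E) :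
    MulAction.stabilizer (E ≃ₐ[F] E) x = F⟮x⟯.fixingSubgroup := by
  ext σ
  simpa using (forall_mem_adjoin_smul_eq_self_iff F (S := {x}) σ).symm

end IntermediateField

namespace RatFunc

open _root_.IntermediateField

variable {K : Type*} [Field K]

theorem deg_eq_finrank (f : RatFunc K) : f.deg = Module.finrank K⟮f⟯ (RatFunc K) :=
  (finrank_eq_max_natDegree f).symm

theorem comp_eq_algEquivOfTranscendental {h : RatFunc K} (ht : Transcendental K h)
    (g : RatFunc K) : g.comp h = algEquivOfTranscendental h ht g :=
  (algEquivOfTranscendental_apply h ht g).symm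

theorem X_comp (h : RatFunc K) : RatFunc.X.comp h = h := by
  simp [RatFunc.comp]

theorem exists_eq_comp_of_mem_adjoin {f h : RatFunc K} (ht : Transcendental K h)
    (hf : f ∈ K⟮h⟯) : ∃ g : RatFunc K, f = g.comp h := by
  obtain ⟨g, hg⟩ := (algEquivOfTranscendental h ht).surjective ⟨f, hf⟩
  exact ⟨g, by rw [comp_eq_algEquivOfTranscendental ht, hg]⟩

theorem deg_comp {h : RatFunc K} (ht : Transcendental K h) (g : RatFunc K) :
    (g.comp h).deg = g.deg * h.deg := by
  let φ : RatFunc K →ₐ[K] RatFunc K := K⟮h⟯.val.comp (algEquivOfTranscendental h ht).toAlgHom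
  have hmap (u : RatFunc K) : K⟮u⟯.map φ = K⟮u.comp h⟯ := by
    rw [adjoin_map, Set.image_singleton, comp_eq_algEquivOfTranscendental ht]
    rfl
  have hgh : K⟮g.comp h⟯ = K⟮g⟯.map φ := (hmap g).symm
  have hh : K⟮h⟯ = K⟮RatFunc.X⟯.map φ := by rw [hmap, X_comp]
  have hgX : K⟮g⟯ ≤ K⟮RatFunc.X⟯ := RatFunc.adjoin_X (K := K) ▸ le_top
  -- Substituting `h` carries the tower `K⟮g⟯ ≤ K(x)` onto `K⟮g ∘ h⟯ ≤ K⟮h⟯`.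
  rw [deg_eq_finrank, deg_eq_finrank, deg_eq_finrank, hgh, hh,
    ← relfinrank_mul_finrank_top (map_mono φ hgX), relfinrank_map_map, RatFunc.adjoin_X,
    relfinrank_top_right]

theorem finite_stabilizer {f : RatFunc K} (hf : f.deg ≠ 0) :
    Finite (MulAction.stabilizer (RatFunc K ≃ₐ[K] RatFunc K) f) := by
  have : FiniteDimensional K⟮f⟯ (RatFunc K) :=
    Module.finite_of_finrank_pos (deg_eq_finrank f ▸ Nat.pos_of_ne_zero hf)
  rw [stabilizer_eq_fixingSubgroup_adjoin_simple]
  exact Finite.of_equiv _ (fixingSubgroupEquiv K⟮f⟯).toEquiv.symm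

theorem exists_eq_comp_of_mem_fixedField (H : Subgroup (RatFunc K ≃ₐ[K] RatFunc K)) [Finite H]
    {f : RatFunc K} (hf : f ∈ fixedField H) :
    ∃ g h : RatFunc K, Transcendental K h ∧ f = g.comp h ∧ h.deg = Nat.card H := by
  have hF := finrank_fixedField_eq_natCard_s13 H
  have hF_ne_bot : fixedField H ≠ ⊥ := by
    intro hbot
    -- `finrank` is `0` on the infinite extension `K(x) / K`.
    rw [hbot, ← adjoin_zero, ← deg_eq_finrank] at hF
    simp only [deg, num_zero, denom_zero, natDegree_zero, natDegree_one, max_self] at hF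
    exact Nat.card_pos.ne' hF.symm
  set h := Luroth.generator (fixedField H)
  have ht : Transcendental K h := Luroth.transcendental_generator hF_ne_bot
  have hFh : fixedField H = K⟮h⟯ := Luroth.eq_adjoin_generator
  obtain ⟨g, hg⟩ := exists_eq_comp_of_mem_adjoin ht (hFh ▸ hf)
  exact ⟨g, h, ht, hg, by rw [deg_eq_finrank, ← hFh, hF]⟩

end RatFunc

/-- The fixing group of an indecomposable rational function of composite degree is
trivial. -/
theorem fixingGroup_of_indecomposable_composite_degree {K : Type*} [Field K]
    (f : RatFunc K) (a b : ℕ) (ha : 2 ≤ a) (hb : 2 ≤ b) (hdeg : f.deg = a * b)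
    (hind : ∀ g h : RatFunc K, f = g.comp h → g.deg = 1 ∨ h.deg = 1) :
    MulAction.stabilizer (RatFunc K ≃ₐ[K] RatFunc K) f = ⊥ := by
  have := RatFunc.finite_stabilizer (f := f) (by rw [hdeg]; positivity)
  by_contra hS
  set p := (Nat.card (MulAction.stabilizer (RatFunc K ≃ₐ[K] RatFunc K) f)).minFac
  have hp : Fact p.Prime := ⟨Nat.minFac_prime (mt Subgroup.card_eq_one.mp hS)⟩
  obtain ⟨ρ, hρ⟩ := exists_prime_orderOf_dvd_card' p (Nat.minFac_dvd _)
  have hcard : Nat.card (Subgroup.zpowers ρ.1) = p := by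
    rw [Nat.card_zpowers, Subgroup.orderOf_coe, hρ]
  have : Finite (Subgroup.zpowers ρ.1) := Nat.finite_of_card_ne_zero (hcard ▸ hp.out.ne_zero)
  have hf : f ∈ IntermediateField.fixedField (Subgroup.zpowers ρ.1) :=
    (IntermediateField.mem_fixedField_iff _ f).mpr fun σ hσ => Subgroup.zpowers_le.mpr ρ.2 hσ
  obtain ⟨g, h, ht, hfgh, hh⟩ := RatFunc.exists_eq_comp_of_mem_fixedField _ hf
  rw [hcard] at hh
  have hfp : f.deg = g.deg * p := by rw [hfgh, RatFunc.deg_comp ht, hh]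
  rcases hind g h hfgh with hg | hh1
  · rw [hg, one_mul, hdeg] at hfp
    exact Nat.not_prime_mul (by omega : a ≠ 1) (by omega : b ≠ 1) (hfp ▸ hp.out)
  · exact hp.out.one_lt.ne' (hh ▸ hh1)
end

section
/- Let K be a field, f ∈ K(x) in normal form of degree m ≥ 1, and let a, b ∈ K with a ≠ 0 define the polynomial unit u = aX + b ∈ K(x). If f∘u = f, then f.num.eval(b) = 0 and a^m = 1. -/
open Polynomial

/-!
Write `u = q` with `q = aX + b`. From `f ∘ q = f` and the coprimality of `num f` and `denom f`,
`num f` divides `num f ∘ q`, which has the same degree; comparing leading coefficients gives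
`num f ∘ q = a^m • num f`, and then `denom f ∘ q = a^m • denom f`. Evaluating the first identity
at `0` gives `num f (b) = 0`. If `a^m ≠ 1`, then `a ≠ 1` and the fixed point `b / (1 - a)` of `q`
would be a common root of `num f` and `denom f`.
-/

namespace Polynomial

variable {K : Type*} [Field K]

theorem comp_eq_C_mul_of_dvd_comp {p q : K[X]} (hq : q.natDegree = 1) (hdvd : p ∣ p.comp q) :
    p.comp q = C (q.leadingCoeff ^ p.natDegree) * p := by
  have hc : q.leadingCoeff ^ p.natDegree ≠ 0 :=
    pow_ne_zero _ (leadingCoeff_ne_zero.mpr (ne_zero_of_natDegree_gt (hq ▸ Nat.one_pos)))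
  refine (eq_of_dvd_of_natDegree_le_of_leadingCoeff ?_ ?_ ?_).symm
  · exact (isUnit_C.mpr hc.isUnit).mul_left_dvd.mpr hdvd
  · rw [natDegree_comp, hq, mul_one, natDegree_C_mul hc]
  · rw [leadingCoeff_comp (by omega), leadingCoeff_mul, leadingCoeff_C, mul_comm]

theorem eval_eq_zero_of_comp_eq_C_mul {p q : K[X]} {c x : K} (hx : q.eval x = x)
    (hp : p.comp q = C c * p) (hc : c ≠ 1) : p.eval x = 0 := by
  have h := congrArg (eval x) hp
  rw [eval_comp, hx, eval_mul, eval_C] at h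
  have h' : (c - 1) * p.eval x = 0 := by linear_combination -h
  exact (mul_eq_zero.mp h').resolve_left (sub_ne_zero.mpr hc)

theorem eq_one_of_isCoprime_of_comp_eq_C_mul {p r q : K[X]} {c x : K} (hpr : IsCoprime p r)
    (hx : q.eval x = x) (hp : p.comp q = C c * p) (hr : r.comp q = C c * r) : c = 1 := by
  by_contra hc
  have hcop := hpr.map (evalRingHom x)
  rw [coe_evalRingHom, eval_eq_zero_of_comp_eq_C_mul hx hp hc,
    eval_eq_zero_of_comp_eq_C_mul hx hr hc, isCoprime_zero_left] at hcop
  exact not_isUnit_zero hcop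

theorem eval_linear_div_one_sub {a : K} (b : K) (ha : a ≠ 1) :
    (C a * X + C b).eval (b / (1 - a)) = b / (1 - a) := by
  have h : (1 : K) - a ≠ 0 := sub_ne_zero.mpr ha.symm
  simp only [eval_add, eval_mul, eval_C, eval_X]
  field_simp
  ring

end Polynomial

namespace RatFunc

variable {K : Type*} [Field K]

theorem comp_algebraMap (f : RatFunc K) (q : K[X]) :
    f.comp (algebraMap K[X] (RatFunc K) q) =
      algebraMap K[X] (RatFunc K) (f.num.comp q) / algebraMap K[X] (RatFunc K) (f.denom.comp q) := by
  simp only [RatFunc.comp, aeval_algebraMap_apply, comp_eq_aeval]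

theorem num_comp_mul_denom_eq_of_comp_eq {f : RatFunc K} {q : K[X]} (hq : q.natDegree ≠ 0)
    (hfix : f.comp (algebraMap K[X] (RatFunc K) q) = f) :
    f.num.comp q * f.denom = f.num * f.denom.comp q := by
  have hden : f.denom.comp q ≠ 0 := by
    rw [Ne, comp_eq_zero_iff, not_or, not_and_or]
    exact ⟨f.denom_ne_zero, .inr fun h => hq (by rw [h, natDegree_C])⟩
  rw [comp_algebraMap] at hfix
  conv_rhs at hfix => rw [← f.num_div_denom]
  rw [div_eq_div_iff (algebraMap_ne_zero hden) (algebraMap_ne_zero f.denom_ne_zero)] at hfix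
  exact algebraMap_injective K (by simpa only [map_mul] using hfix)

theorem comp_num_denom_eq_C_mul_of_comp_eq {f : RatFunc K} (hf : f.num ≠ 0) {q : K[X]}
    (hq : q.natDegree = 1) (hfix : f.comp (algebraMap K[X] (RatFunc K) q) = f) :
    f.num.comp q = Polynomial.C (q.leadingCoeff ^ f.num.natDegree) * f.num ∧
      f.denom.comp q = Polynomial.C (q.leadingCoeff ^ f.num.natDegree) * f.denom := by
  have hcross := num_comp_mul_denom_eq_of_comp_eq (by omega) hfix
  have hnum := comp_eq_C_mul_of_dvd_comp hq
    (f.isCoprime_num_denom.dvd_of_dvd_mul_right ⟨_, hcross⟩)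
  refine ⟨hnum, mul_left_cancel₀ hf ?_⟩
  rw [← hcross, hnum]
  ring

end RatFunc

theorem fixing_polynomial_unit_properties_general {K : Type*} [Field K]
    (f : RatFunc K) (hf : f.IsNormalForm)
    (a b : K) (ha : a ≠ 0)
    (u : RatFunc K) (hu : u = RatFunc.C a * RatFunc.X + RatFunc.C b)
    (hfix : f.comp u = f) :
    f.num.eval b = 0 ∧ a ^ f.deg = 1 := by
  have hu' : u = algebraMap K[X] (RatFunc K) (C a * X + C b) := by
    simp [hu, RatFunc.algebraMap_C, RatFunc.algebraMap_X]
  have hnum0 : f.num ≠ 0 := ne_zero_of_natDegree_gt hf.1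
  obtain ⟨hnum, hden⟩ :=
    RatFunc.comp_num_denom_eq_C_mul_of_comp_eq hnum0 (natDegree_linear ha) (hu' ▸ hfix)
  rw [leadingCoeff_linear ha] at hnum hden
  refine ⟨?_, ?_⟩
  · simpa [hf.2] using congrArg (eval 0) hnum
  · rcases eq_or_ne a 1 with rfl | ha1
    · exact one_pow _
    rw [show f.deg = f.num.natDegree from max_eq_left hf.1.le]
    exact eq_one_of_isCoprime_of_comp_eq_C_mul f.isCoprime_num_denom
      (eval_linear_div_one_sub b ha1) hnum hden

/-- If `f` is in normal form of degree `m` and the polynomial unit `u = aX + b` (`a ≠ 0`)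
fixes `f` under composition, then `b` is a root of the numerator of `f` and `a^m = 1`. -/
theorem fixing_polynomial_unit_properties {K : Type*} [Field K]
    (f : RatFunc K) (hf1 : 1 ≤ f.deg) (hf : f.IsNormalForm)
    (a b : K) (ha : a ≠ 0)
    (u : RatFunc K) (hu : u = RatFunc.C a * RatFunc.X + RatFunc.C b)
    (hfix : f.comp u = f) :
    f.num.eval b = 0 ∧ a ^ f.deg = 1 :=
  fixing_polynomial_unit_properties_general f hf a b ha u hu hfix
end

section
/- In ℚ(x) = RatFunc ℚ, let f = x³(x+6)³(x²−6x+36)³ / ((x−3)³(x²+3x+9)³), g₁ = x³, g₂ = x(x−12)/(x−3), g₃ = x(x+6)/(x−3), h₁ = x³(x+24)/(x−3), and h₂ = x(x²−6x+36)/(x²+3x+9). Then deg f = 12, deg g₁ = 3, deg g₂ = deg g₃ = 2, deg h₁ = 4, deg h₂ = 3, and f = g₁∘(g₂∘g₃) = h₁∘h₂. -/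
open Polynomial

local notation "x" => (RatFunc.X : RatFunc ℚ)

/-!
Everything reduces to two identities in `ℚ(x)`. First, `g₂ ∘ g₃ = x(x³ + 216)/(x³ - 27)`,
whose cube is `f`. Second, `h₂ + 24 = (x + 6)³/(x² + 3x + 9)` and
`h₂ - 3 = (x - 3)³/(x² + 3x + 9)`, so `h₁ ∘ h₂ = h₂³ (h₂ + 24)/(h₂ - 3)` is the same cube.
The degrees are read off from reduced forms `p / q` (with `q` monic and `p`, `q` coprime),
coprimality being certified by Bézout identities `u p + v q = c` with `c` a nonzero constant.
-/

theorem IsCoprime.gcd_eq_one {R : Type*} [CommRing R] [IsDomain R] [IsBezout R]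
    [NormalizedGCDMonoid R] {a b : R} (h : IsCoprime a b) : gcd a b = 1 := by
  rw [← normalize_gcd, normalize_eq_one]
  exact (gcd_isUnit_iff a b).mpr h

namespace Polynomial

variable {K : Type*} [Field K] {p q : K[X]}

theorem isCoprime_of_mul_add_mul_eq_C {u v : K[X]} {c : K} (hc : c ≠ 0)
    (h : u * p + v * q = C c) : IsCoprime p q :=
  ⟨C c⁻¹ * u, C c⁻¹ * v, by
    rw [mul_assoc, mul_assoc, ← mul_add, h, ← C_mul, inv_mul_cancel₀ hc, C_1]⟩

theorem isCoprime_X_sub_C_of_eval_ne_zero {a : K} (h : p.eval a ≠ 0) :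
    IsCoprime p (X - C a) :=
  isCoprime_of_mul_add_mul_eq_C (u := 1) (v := -(p /ₘ (X - C a))) h <| by
    rw [← modByMonic_X_sub_C_eq_C_eval, modByMonic_eq_sub_mul_div]
    ring

end Polynomial

namespace RatFunc

variable {K : Type*} [Field K]

def IsReducedForm (f : RatFunc K) (p q : K[X]) : Prop :=
  q.Monic ∧ IsCoprime p q ∧ f = algebraMap K[X] (RatFunc K) p / algebraMap K[X] (RatFunc K) q

namespace IsReducedForm

variable {f : RatFunc K} {p q : K[X]}

theorem num_eq (hf : IsReducedForm f p q) : f.num = p := by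
  classical
  obtain ⟨hq, hpq, rfl⟩ := hf
  simp [num_div, hpq.gcd_eq_one, hq.leadingCoeff]

theorem denom_eq (hf : IsReducedForm f p q) : f.denom = q := by
  classical
  obtain ⟨hq, hpq, rfl⟩ := hf
  simp [denom_div _ hq.ne_zero, hpq.gcd_eq_one, hq.leadingCoeff]

theorem deg_eq {n : ℕ} (hf : IsReducedForm f p q) (hp : p.natDegree = n)
    (hq : q.natDegree ≤ n) : f.deg = n := by
  rw [deg, hf.num_eq, hf.denom_eq, hp, max_eq_left hq]

theorem comp_eq (hf : IsReducedForm f p q) (g : RatFunc K) :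
    f.comp g = aeval g p / aeval g q := by
  rw [comp, hf.num_eq, hf.denom_eq]

end IsReducedForm

end RatFunc

theorem isReducedForm_f :
    RatFunc.IsReducedForm ((x ^ 3 * (x + 6) ^ 3 * (x ^ 2 - 6 * x + 36) ^ 3) /
        ((x - 3) ^ 3 * (x ^ 2 + 3 * x + 9) ^ 3)) ((X * (X ^ 3 + 216)) ^ 3) ((X ^ 3 - 27) ^ 3) := by
  refine ⟨by monicity!, IsCoprime.pow (isCoprime_of_mul_add_mul_eq_C (c := 6561)
    (u := X ^ 2) (v := -(X ^ 3 + 243)) (by norm_num) ?_), ?_⟩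
  · rw [C_ofNat]
    ring
  · simp [RatFunc.algebraMap_X, map_ofNat]
    ring

theorem isReducedForm_g₁ : RatFunc.IsReducedForm (x ^ 3) (X ^ 3) 1 :=
  ⟨monic_one, isCoprime_one_right, by simp [RatFunc.algebraMap_X]⟩

theorem isReducedForm_g₂ :
    RatFunc.IsReducedForm (x * (x - 12) / (x - 3)) (X * (X - 12)) (X - C 3) :=
  ⟨monic_X_sub_C 3, isCoprime_X_sub_C_of_eval_ne_zero (by norm_num),
    by simp [RatFunc.algebraMap_X, map_ofNat]⟩

theorem isReducedForm_g₃ :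
    RatFunc.IsReducedForm (x * (x + 6) / (x - 3)) (X * (X + 6)) (X - C 3) :=
  ⟨monic_X_sub_C 3, isCoprime_X_sub_C_of_eval_ne_zero (by norm_num),
    by simp [RatFunc.algebraMap_X, map_ofNat]⟩

theorem isReducedForm_h₁ :
    RatFunc.IsReducedForm (x ^ 3 * (x + 24) / (x - 3)) (X ^ 3 * (X + 24)) (X - C 3) :=
  ⟨monic_X_sub_C 3, isCoprime_X_sub_C_of_eval_ne_zero (by norm_num),
    by simp [RatFunc.algebraMap_X, map_ofNat]⟩

theorem isReducedForm_h₂ :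
    RatFunc.IsReducedForm (x * (x ^ 2 - 6 * x + 36) / (x ^ 2 + 3 * x + 9))
      (X * (X ^ 2 - 6 * X + 36)) (X ^ 2 + 3 * X + 9) := by
  refine ⟨by monicity!, isCoprime_of_mul_add_mul_eq_C (c := 729) (u := -2 * X - 3)
    (v := 2 * X ^ 2 - 15 * X + 81) (by norm_num) ?_, by simp [RatFunc.algebraMap_X, map_ofNat]⟩
  rw [C_ofNat]
  ring

theorem X_sub_three_ne_zero : x - 3 ≠ 0 := by
  simpa [RatFunc.algebraMap_X, map_ofNat] using
    RatFunc.algebraMap_ne_zero (monic_X_sub_C (3 : ℚ)).ne_zero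

theorem X_sq_add_three_mul_X_add_nine_ne_zero : x ^ 2 + 3 * x + 9 ≠ 0 := by
  have hq : (X ^ 2 + 3 * X + 9 : ℚ[X]).Monic := by monicity!
  simpa [RatFunc.algebraMap_X, map_ofNat] using RatFunc.algebraMap_ne_zero hq.ne_zero

theorem g₁_comp_g₂_comp_g₃ :
    (x ^ 3).comp ((x * (x - 12) / (x - 3)).comp (x * (x + 6) / (x - 3))) =
      x ^ 3 * (x + 6) ^ 3 * (x ^ 2 - 6 * x + 36) ^ 3 / ((x - 3) ^ 3 * (x ^ 2 + 3 * x + 9) ^ 3) := by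
  have h3 := X_sub_three_ne_zero
  have h9 := X_sq_add_three_mul_X_add_nine_ne_zero
  rw [isReducedForm_g₁.comp_eq, isReducedForm_g₂.comp_eq]
  simp only [map_mul, map_sub, map_pow, map_one, map_ofNat, aeval_X, div_one]
  field_simp
  ring

theorem h₁_comp_h₂ :
    (x ^ 3 * (x + 24) / (x - 3)).comp (x * (x ^ 2 - 6 * x + 36) / (x ^ 2 + 3 * x + 9)) =
      x ^ 3 * (x + 6) ^ 3 * (x ^ 2 - 6 * x + 36) ^ 3 / ((x - 3) ^ 3 * (x ^ 2 + 3 * x + 9) ^ 3) := by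
  have h3 := X_sub_three_ne_zero
  have h9 := X_sq_add_three_mul_X_add_nine_ne_zero
  have h₂_add : x * (x ^ 2 - 6 * x + 36) / (x ^ 2 + 3 * x + 9) + 24 =
      (x + 6) ^ 3 / (x ^ 2 + 3 * x + 9) := by
    rw [eq_div_iff h9, add_mul, div_mul_cancel₀ _ h9]
    ring
  have h₂_sub : x * (x ^ 2 - 6 * x + 36) / (x ^ 2 + 3 * x + 9) - 3 =
      (x - 3) ^ 3 / (x ^ 2 + 3 * x + 9) := by
    rw [eq_div_iff h9, sub_mul, div_mul_cancel₀ _ h9]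
    ring
  rw [isReducedForm_h₁.comp_eq]
  simp only [map_mul, map_add, map_pow, map_sub, map_ofNat, aeval_X]
  rw [h₂_add, h₂_sub]
  field_simp

/-- The degree-12 rational function
`f = x³(x+6)³(x²-6x+36)³ / ((x-3)³(x²+3x+9)³) ∈ ℚ(x)` admits the two complete
decompositions `f = g₁ ∘ g₂ ∘ g₃ = h₁ ∘ h₂` of different lengths, where
`g₁ = x³`, `g₂ = x(x-12)/(x-3)`, `g₃ = x(x+6)/(x-3)`,
`h₁ = x³(x+24)/(x-3)` and `h₂ = x(x²-6x+36)/(x²+3x+9)`. -/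
theorem two_decompositions_of_different_length
    (f g₁ g₂ g₃ h₁ h₂ : RatFunc ℚ)
    (hf : f = (x ^ 3 * (x + 6) ^ 3 * (x ^ 2 - 6 * x + 36) ^ 3) /
        ((x - 3) ^ 3 * (x ^ 2 + 3 * x + 9) ^ 3))
    (hg₁ : g₁ = x ^ 3)
    (hg₂ : g₂ = x * (x - 12) / (x - 3))
    (hg₃ : g₃ = x * (x + 6) / (x - 3))
    (hh₁ : h₁ = x ^ 3 * (x + 24) / (x - 3))
    (hh₂ : h₂ = x * (x ^ 2 - 6 * x + 36) / (x ^ 2 + 3 * x + 9)) :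
    f.deg = 12 ∧ g₁.deg = 3 ∧ g₂.deg = 2 ∧ g₃.deg = 2 ∧ h₁.deg = 4 ∧ h₂.deg = 3 ∧
      f = g₁.comp (g₂.comp g₃) ∧ f = h₁.comp h₂ := by
  subst hf hg₁ hg₂ hg₃ hh₁ hh₂
  exact ⟨isReducedForm_f.deg_eq (by compute_degree!) (by compute_degree!),
    isReducedForm_g₁.deg_eq (by compute_degree!) (by compute_degree!),
    isReducedForm_g₂.deg_eq (by compute_degree!) (by compute_degree!),
    isReducedForm_g₃.deg_eq (by compute_degree!) (by compute_degree!),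
    isReducedForm_h₁.deg_eq (by compute_degree!) (by compute_degree!),
    isReducedForm_h₂.deg_eq (by compute_degree!) (by compute_degree!),
    g₁_comp_g₂_comp_g₃.symm, h₁_comp_h₂.symm⟩
end

section
/- In ℚ(x) = RatFunc ℚ, the degree-4 rational function h₁ = x³(x+24)/(x−3) is indecomposable; that is, there exist no g, h ∈ ℚ(x) with deg g = 2 and deg h = 2 such that h₁ = g∘h. -/
open Polynomial

local notation "x" => (RatFunc.X : RatFunc ℚ)

/-! Write `g = G₁ / G₂` and `h = P / Q` in lowest terms, all of degree `≤ 2`. Clearing `Q²`,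
`g ∘ h = Ĝ₁(P, Q) / Ĝ₂(P, Q)` with `Ĝᵢ` the quadratic homogenizations, so
`x³(x + 24) Ĝ₂(P, Q) = (x - 3) Ĝ₁(P, Q)`; coprimality and `deg Ĝ₁(P, Q) ≤ 4` force
`Ĝ₁(P, Q) = c x³(x + 24)`, which vanishes to order exactly `3` at `0`.

On the other hand, if a binary quadratic form `F` vanishes at `(P(t), Q(t)) ≠ (0, 0)`, then in a
basis `S, T` of `span {P, Q}` with `T(t) = 0`, `S(t) = 1` it reads `F(P, Q) = T (γ T - β S)`. Its
order at `t` is therefore `ord T ≤ max (deg P) (deg Q)` if `β ≠ 0` and `2 ord T` if `β = 0`: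
never `3` when `P` and `Q` have degree `≤ 2`. -/

namespace Polynomial

section CommSemiring

variable {R : Type*} [CommSemiring R]

noncomputable def homogenizeEval (G : R[X]) (n : ℕ) (P Q : R[X]) : R[X] :=
  MvPolynomial.aeval ![P, Q] (G.homogenize n)

lemma homogenizeEval_two (G P Q : R[X]) :
    homogenizeEval G 2 P Q =
      C (G.coeff 2) * P ^ 2 + C (G.coeff 1) * (P * Q) + C (G.coeff 0) * Q ^ 2 := by
  simp [homogenizeEval, homogenize, Finset.Nat.antidiagonal_succ, MvPolynomial.aeval_monomial,
    Finsupp.prod_fintype, Fin.prod_univ_two]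
  ring

lemma natDegree_homogenizeEval_two_le (G : R[X]) {P Q : R[X]} {d : ℕ}
    (hP : P.natDegree ≤ d) (hQ : Q.natDegree ≤ d) :
    (homogenizeEval G 2 P Q).natDegree ≤ 2 * d := by
  rw [homogenizeEval_two]
  refine natDegree_add_le_of_degree_le (natDegree_add_le_of_degree_le ?_ ?_) ?_ <;>
    refine natDegree_C_mul_le _ _ |>.trans ?_
  · exact natDegree_pow_le.trans (Nat.mul_le_mul_left 2 hP)
  · exact natDegree_mul_le.trans (by omega)
  · exact natDegree_pow_le.trans (Nat.mul_le_mul_left 2 hQ)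

lemma mvAeval_homogenize_eq_pow_mul_aeval {L : Type*} [Field L] [Algebra R L]
    {G : R[X]} {n : ℕ} (hG : G.natDegree ≤ n) (u : L) {v : L} (hv : v ≠ 0) :
    MvPolynomial.aeval ![u, v] (G.homogenize n) = v ^ n * aeval (u / v) G := by
  refine induction_with_natDegree_le
    (fun G ↦ MvPolynomial.aeval ![u, v] (G.homogenize n) = v ^ n * aeval (u / v) G)
    n (by simp) (fun i c _ hi ↦ ?_) (fun p q _ _ hp hq ↦ by simp [hp, hq, mul_add]) G hG
  rw [C_mul_X_pow_eq_monomial, homogenize_monomial hi]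
  simp [MvPolynomial.aeval_monomial, Finsupp.prod_fintype, Fin.prod_univ_two, div_pow]
  field_simp
  rw [mul_assoc, ← pow_add, Nat.sub_add_cancel hi]

end CommSemiring

section CommRing

variable {R : Type*} [CommRing R]

/-- Since `ps - qr = 1`, `S = sP - rQ` and `T = qP - pQ` satisfy `P = pS - rT`, `Q = qS - sT`;
the right side is the form expanded in `S, T`. -/
lemma quadratic_form_change_of_basis (a b c p q r s : R) (hdet : p * s - q * r = 1)
    (P Q : R[X]) :
    C a * P ^ 2 + C b * (P * Q) + C c * Q ^ 2 =
      C (a * p ^ 2 + b * p * q + c * q ^ 2) * (C s * P - C r * Q) ^ 2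
        - C (2 * a * p * r + b * (p * s + q * r) + 2 * c * q * s) *
            (C s * P - C r * Q) * (C q * P - C p * Q)
        + C (a * r ^ 2 + b * r * s + c * s ^ 2) * (C q * P - C p * Q) ^ 2 := by
  have h : C (p * s - q * r) = (1 : R[X]) := by rw [hdet, C_1]
  simp only [map_add, map_sub, map_mul, map_pow, map_ofNat] at h ⊢
  linear_combination (-(C p * C s - C q * C r + 1) *
    (C a * P ^ 2 + C b * (P * Q) + C c * Q ^ 2)) * h

variable [IsDomain R]

lemma rootMultiplicity_le_natDegree {p : R[X]} (hp : p ≠ 0) (t : R) :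
    rootMultiplicity t p ≤ p.natDegree := by
  simpa using natDegree_le_of_dvd (pow_rootMultiplicity_dvd p t) hp

theorem rootMultiplicity_quadratic_le_or_even {P Q : R[X]} (hPQ : IsCoprime P Q) (a b c t : R) :
    rootMultiplicity t (C a * P ^ 2 + C b * (P * Q) + C c * Q ^ 2) ≤
        max P.natDegree Q.natDegree ∨
      Even (rootMultiplicity t (C a * P ^ 2 + C b * (P * Q) + C c * Q ^ 2)) := by
  set F := C a * P ^ 2 + C b * (P * Q) + C c * Q ^ 2 with hF
  set p := P.eval t
  set q := Q.eval t
  by_cases hFt : F.IsRoot t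
  swap
  · simp [rootMultiplicity_eq_zero hFt]
  by_cases hF0 : F = 0
  · simp [hF0]
  obtain ⟨r, s, hdet⟩ : ∃ r s : R, p * s - q * r = 1 := by
    obtain ⟨u, v, huv⟩ := hPQ
    exact ⟨-v.eval t, u.eval t, by simpa [p, q, mul_comm] using congrArg (eval t) huv⟩
  set T := C q * P - C p * Q
  set S := C s * P - C r * Q
  have hFpq : a * p ^ 2 + b * p * q + c * q ^ 2 = 0 := by
    simpa [F, IsRoot, p, q, mul_assoc] using hFt
  have hT : T.natDegree ≤ max P.natDegree Q.natDegree :=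
    (natDegree_sub_le _ _).trans (max_le_max (natDegree_C_mul_le _ _) (natDegree_C_mul_le _ _))
  have hTt : T.eval t = 0 := by simp [T, p, q, mul_comm]
  have hSt : S.eval t = 1 := by simpa [S, p, q, mul_comm] using hdet
  set β := 2 * a * p * r + b * (p * s + q * r) + 2 * c * q * s
  set γ := a * r ^ 2 + b * r * s + c * s ^ 2
  have hFST : F = T * (C γ * T - C β * S) := by
    rw [hF, quadratic_form_change_of_basis a b c p q _ _ hdet, hFpq, C_0]
    ring
  rw [hFST] at hF0 ⊢
  rw [rootMultiplicity_mul hF0]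
  by_cases hβ : β = 0
  · right
    rw [hβ, C_0, zero_mul, sub_zero] at hF0 ⊢
    rw [rootMultiplicity_mul (right_ne_zero_of_mul hF0), rootMultiplicity_C, zero_add]
    exact Even.add_self _
  · left
    have : ¬ (C γ * T - C β * S).IsRoot t := by simp [IsRoot, hTt, hSt, hβ]
    rw [rootMultiplicity_eq_zero this, add_zero]
    exact (rootMultiplicity_le_natDegree (left_ne_zero_of_mul hF0) t).trans hT

end CommRing

end Polynomial

namespace RatFunc

variable {K : Type*} [Field K]

lemma algebraMap_homogenizeEval {G : K[X]} {n : ℕ} (hG : G.natDegree ≤ n) (h : RatFunc K) :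
    algebraMap K[X] (RatFunc K) (homogenizeEval G n h.num h.denom) =
      algebraMap K[X] (RatFunc K) h.denom ^ n * aeval h G := by
  rw [homogenizeEval, ← MvPolynomial.aeval_algebraMap_apply]
  have hv : (algebraMap K[X] (RatFunc K)) ∘ ![h.num, h.denom] =
      ![algebraMap K[X] (RatFunc K) h.num, algebraMap K[X] (RatFunc K) h.denom] := by
    ext i; fin_cases i <;> rfl
  rw [hv, mvAeval_homogenize_eq_pow_mul_aeval hG _ (algebraMap_ne_zero h.denom_ne_zero),
    num_div_denom]

lemma comp_eq_div_homogenizeEval {g : RatFunc K} {n : ℕ} (hnum : g.num.natDegree ≤ n)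
    (hden : g.denom.natDegree ≤ n) (h : RatFunc K) :
    g.comp h = algebraMap K[X] (RatFunc K) (homogenizeEval g.num n h.num h.denom) /
      algebraMap K[X] (RatFunc K) (homogenizeEval g.denom n h.num h.denom) := by
  rw [comp, algebraMap_homogenizeEval hnum, algebraMap_homogenizeEval hden,
    mul_div_mul_left _ _ (pow_ne_zero n (algebraMap_ne_zero h.denom_ne_zero))]

lemma exists_eq_C_mul_of_algebraMap_div_eq {N D A B : K[X]} (hN : N.Monic) (hD : D ≠ 0)
    (hND : IsCoprime N D) (hA : A.natDegree ≤ N.natDegree)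
    (h : algebraMap K[X] (RatFunc K) N / algebraMap K[X] (RatFunc K) D =
      algebraMap K[X] (RatFunc K) A / algebraMap K[X] (RatFunc K) B) :
    ∃ c ≠ 0, A = Polynomial.C c * N := by
  have hB : B ≠ 0 := by
    rintro rfl
    simp [hN.ne_zero, hD] at h
  have hNBDA : N * B = D * A := by
    rw [div_eq_div_iff (algebraMap_ne_zero hD) (algebraMap_ne_zero hB), ← map_mul, ← map_mul] at h
    exact (algebraMap_injective K h).trans (mul_comm A D)
  have hA0 : A ≠ 0 := by
    rintro rfl
    simp [hN.ne_zero, hB] at hNBDA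
  refine ⟨A.leadingCoeff, leadingCoeff_ne_zero.mpr hA0,
    eq_leadingCoeff_mul_of_monic_of_dvd_of_natDegree_le hN ?_ hA⟩
  exact hND.dvd_of_dvd_mul_left ⟨B, hNBDA.symm⟩

end RatFunc

/-- The degree-4 rational function `h₁ = x³(x+24)/(x-3) ∈ ℚ(x)` is indecomposable: it is
not the composition of two rational functions of degree 2. -/
theorem h₁_indecomposable (h₁ : RatFunc ℚ)
    (hh₁ : h₁ = x ^ 3 * (x + 24) / (x - 3)) :
    ¬ ∃ g h : RatFunc ℚ, g.deg = 2 ∧ h.deg = 2 ∧ h₁ = g.comp h := by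
  rintro ⟨g, h, hg, hh, hcomp⟩
  obtain ⟨hgn, hgd⟩ := max_le_iff.mp hg.le
  have hh2 : max h.num.natDegree h.denom.natDegree ≤ 2 := hh.le
  obtain ⟨hhn, hhd⟩ := max_le_iff.mp hh2
  set N : ℚ[X] := X ^ 3 * (X + C 24)
  have hNmonic : N.Monic := by simp only [N]; monicity!
  have hNdeg : N.natDegree = 4 := by simp only [N]; compute_degree!
  have hND : IsCoprime N (X - C 3) :=
    ((irreducible_X_sub_C 3).coprime_iff_not_dvd.mpr (by rw [dvd_iff_isRoot]; norm_num [N])).symm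
  rw [hh₁, RatFunc.comp_eq_div_homogenizeEval hgn hgd h] at hcomp
  obtain ⟨c, hc, hA⟩ := RatFunc.exists_eq_C_mul_of_algebraMap_div_eq hNmonic (X_sub_C_ne_zero 3)
    hND ((natDegree_homogenizeEval_two_le _ hhn hhd).trans hNdeg.ge)
    (by simpa [N, RatFunc.algebraMap_X, RatFunc.algebraMap_C] using hcomp)
  have h3 : rootMultiplicity 0 (homogenizeEval g.num 2 h.num h.denom) = 3 := by
    rw [hA, rootMultiplicity_eq_natTrailingDegree', natTrailingDegree_mul (C_ne_zero.mpr hc)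
      hNmonic.ne_zero, natTrailingDegree_mul (pow_ne_zero 3 X_ne_zero) (X_add_C_ne_zero 24)]
    simp
  have hquad := rootMultiplicity_quadratic_le_or_even h.isCoprime_num_denom
    (g.num.coeff 2) (g.num.coeff 1) (g.num.coeff 0) 0
  rw [← homogenizeEval_two, h3] at hquad
  rcases hquad with h3_le | h3_even
  · omega
  · exact (by decide : ¬ Even 3) h3_even
end
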